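/- arXiv:2209.04567 — 7 statements merged into one kernel-verified Lean document; each statement's English description precedes it below -/
import Mathlib

section
/- Every finite chordal graph G has clique cover number equal to its independence number, i.e., the minimum number of cliques needed to cover the vertex set of G equals the maximum size of a set of pairwise non-adjacent vertices of G. -/
/-- A clique cover of a simple graph: a finite family of cliques covering every vertex. -/
def SimpleGraph.IsCliqueCover {V : Type} (G : SimpleGraph V) (K : Finset (Finset V)) : Prop :=
  (∀ s ∈ K, G.IsClique (s : Set V)) ∧ ∀ v : V, ∃ s ∈ K, v ∈ s

/-- The clique cover number: minimum number of cliques in a clique cover. -/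
noncomputable def SimpleGraph.cliqueCoverNum {V : Type} (G : SimpleGraph V) : ℕ :=
  sInf {n | ∃ K : Finset (Finset V), G.IsCliqueCover K ∧ K.card = n}

/-- The closed neighborhood of a vertex. -/
def SimpleGraph.closedNbhd {V : Type} (G : SimpleGraph V) (v : V) : Set V :=
  {w | w = v ∨ G.Adj v w}

/-- A graph is chordal if every cycle of length at least four has a chord:
an edge of the graph joining two vertices of the cycle that is not an edge of the cycle. -/
def SimpleGraph.Chordal {V : Type} (G : SimpleGraph V) : Prop :=
  ∀ (v : V) (c : G.Walk v v), c.IsCycle → 4 ≤ c.length →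
    ∃ x y : V, G.Adj x y ∧ x ∈ c.support ∧ y ∈ c.support ∧ s(x, y) ∉ c.edges

/-- An independent set: a set of pairwise non-adjacent vertices. -/
def SimpleGraph.IsIndepSet' {V : Type} (G : SimpleGraph V) (s : Set V) : Prop :=
  s.Pairwise fun v w => ¬ G.Adj v w

/-- The independence number: the maximum size of an independent set. -/
noncomputable def SimpleGraph.indepNum' {V : Type} (G : SimpleGraph V) : ℕ :=
  sSup {n | ∃ s : Finset V, G.IsIndepSet' ↑s ∧ s.card = n}

/-!
A finite chordal graph has a simplicial vertex `v` (one whose neighbours form a clique), by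
Dirac's argument that minimal vertex separators of chordal graphs are cliques. Removing the
closed neighbourhood `N[v]`, itself a clique, lowers the clique cover number `θ` by at most one and
the independence number `α` by at least one (add `v` to an independent set of `G - N[v]`).
Since induced subgraphs of chordal graphs are chordal, induction gives `θ ≤ α`; the reverse
inequality holds in every graph because an independent set meets each clique at most once.
-/
namespace SimpleGraph

variable {V : Type} {G : SimpleGraph V}

namespace Walk

lemma two_le_length_of_ne_of_notMem_edges {u v : V} (p : G.Walk u v) (huv : u ≠ v)
    (he : s(u, v) ∉ p.edges) :
    2 ≤ p.length := by
  rcases p with _ | ⟨h, _ | ⟨h', q⟩⟩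
  · exact absurd rfl huv
  · simp at he
  · simp

lemma exists_length_lt_of_adj_start {x y v : V} (p : G.Walk x y) (hv : v ∈ p.support)
    (hxv : G.Adj x v) (he : s(x, v) ∉ p.edges) :
    ∃ q : G.Walk x y, q.length < p.length ∧ q.support ⊆ p.support := by
  classical
  refine ⟨cons hxv (p.dropUntil v hv), ?_, ?_⟩
  · have h2 := (p.takeUntil v hv).two_le_length_of_ne_of_notMem_edges hxv.ne
      fun h => he (p.edges_takeUntil_subset_edges hv h)
    have := congrArg length (p.take_spec hv)
    rw [length_append] at this
    simp only [length_cons]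
    omega
  · rw [support_cons, List.cons_subset]
    exact ⟨p.start_mem_support, p.support_dropUntil_subset_support hv⟩

lemma exists_length_lt_of_adj {x y u v : V} (p : G.Walk x y) (hu : u ∈ p.support)
    (hv : v ∈ p.support) (huv : G.Adj u v) (he : s(u, v) ∉ p.edges) :
    ∃ q : G.Walk x y, q.length < p.length ∧ q.support ⊆ p.support := by
  induction p with
  | nil =>
    simp only [support_nil, List.mem_singleton] at hu hv
    exact absurd (hu.trans hv.symm) huv.ne
  | @cons x x' y h p ih =>
    rw [support_cons, List.mem_cons] at hu hv
    rw [edges_cons, List.mem_cons, not_or] at he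
    rcases hu with rfl | hu
    · exact (cons h p).exists_length_lt_of_adj_start (by simp [hv]) huv (by simp [he.1, he.2])
    rcases hv with rfl | hv
    · exact (cons h p).exists_length_lt_of_adj_start (by simp [hu]) huv.symm
        (by simp [Sym2.eq_swap, he.1, he.2])
    obtain ⟨q, hlt, hsub⟩ := ih hu hv he.2
    exact ⟨cons h q, by simpa using hlt, by simpa using List.subset_cons_of_subset _ hsub⟩

lemma exists_isPath_chordless {x y : V} (P : Set V) (p : G.Walk x y)
    (hp : ∀ w ∈ p.support, w ∈ P) :
    ∃ q : G.Walk x y, q.IsPath ∧ (∀ w ∈ q.support, w ∈ P) ∧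
      ∀ u ∈ q.support, ∀ v ∈ q.support, G.Adj u v → s(u, v) ∈ q.edges := by
  classical
  obtain ⟨q, hqP, hmin⟩ := exists_minimalFor_of_wellFoundedLT
    (fun q : G.Walk x y => ∀ w ∈ q.support, w ∈ P) length ⟨p, hp⟩
  have hbP : ∀ w ∈ q.bypass.support, w ∈ P :=
    fun w hw => hqP w (q.support_bypass_subset_support hw)
  refine ⟨q.bypass, q.bypass_isPath, hbP, fun u hu v hv huv => ?_⟩
  by_contra he
  obtain ⟨r, hlt, hsub⟩ := q.bypass.exists_length_lt_of_adj hu hv huv he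
  have hr : r.length < q.length := hlt.trans_le q.length_bypass_le_length
  exact hr.not_ge (hmin (fun w hw => hbP w (hsub hw)) hr.le)

lemma IsPath.start_notMem_support_tail {u v : V} {p : G.Walk u v} (hp : p.IsPath) :
    u ∉ p.support.tail :=
  (List.nodup_cons.mp (p.cons_tail_support ▸ hp.support_nodup)).1

lemma IsPath.isCycle_append_reverse {u v : V} {p q : G.Walk u v} (hp : p.IsPath)
    (hq : q.IsPath) (hpq : ∀ w ∈ p.support, w ∈ q.support → w = u ∨ w = v)
    (hn : 1 < p.length) : (p.append q.reverse).IsCycle := by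
  refine hp.isCycle_append hq.reverse (fun w hwp hwq => ?_) (Or.inl hn)
  have hwq' : w ∈ q.support := by simpa using List.mem_of_mem_tail hwq
  rcases hpq w (List.mem_of_mem_tail hwp) hwq' with rfl | rfl
  exacts [hp.start_notMem_support_tail hwp, hq.reverse.start_notMem_support_tail hwq]

end Walk

def ReachableAvoiding (G : SimpleGraph V) (S : Set V) (u v : V) : Prop :=
  ∃ p : G.Walk u v, ∀ w ∈ p.support, w ∉ S

lemma Adj.reachableAvoiding {S : Set V} {u v : V} (h : G.Adj u v) (hu : u ∉ S) (hv : v ∉ S) :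
    G.ReachableAvoiding S u v :=
  ⟨h.toWalk, by simp [hu, hv]⟩

namespace ReachableAvoiding

variable {S : Set V} {u v w : V}

lemma refl (hu : u ∉ S) : G.ReachableAvoiding S u u :=
  ⟨Walk.nil, by simpa using hu⟩

lemma symm (h : G.ReachableAvoiding S u v) : G.ReachableAvoiding S v u := by
  obtain ⟨p, hp⟩ := h
  exact ⟨p.reverse, by simpa using hp⟩

lemma trans (huv : G.ReachableAvoiding S u v) (hvw : G.ReachableAvoiding S v w) :
    G.ReachableAvoiding S u w := by
  obtain ⟨p, hp⟩ := huv
  obtain ⟨q, hq⟩ := hvw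
  refine ⟨p.append q, fun x hx => ?_⟩
  rcases (Walk.mem_support_append_iff _ _).mp hx with hx | hx
  exacts [hp x hx, hq x hx]

lemma notMem_right (h : G.ReachableAvoiding S u v) : v ∉ S := by
  obtain ⟨p, hp⟩ := h
  exact hp v p.end_mem_support

lemma adj (h : G.ReachableAvoiding S u v) (hvw : G.Adj v w) (hw : w ∉ S) :
    G.ReachableAvoiding S u w :=
  h.trans (hvw.reachableAvoiding h.notMem_right hw)

lemma exists_walk (hu : G.ReachableAvoiding S w u) (hv : G.ReachableAvoiding S w v) :
    ∃ p : G.Walk u v, ∀ x ∈ p.support, G.ReachableAvoiding S w x := by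
  classical
  obtain ⟨p, hp⟩ := hu.symm.trans hv
  exact ⟨p, fun x hx => hu.trans
    ⟨p.takeUntil x hx, fun y hy => hp y (p.support_takeUntil_subset_support hx hy)⟩⟩

end ReachableAvoiding

def IsSeparator (G : SimpleGraph V) (S : Set V) (a b : V) : Prop :=
  a ∉ S ∧ b ∉ S ∧ ¬G.ReachableAvoiding S a b

variable {S : Set V} {a b x y : V}

def IsMinimalSeparator (G : SimpleGraph V) (S : Set V) (a b : V) : Prop :=
  Minimal (G.IsSeparator · a b) S

lemma IsSeparator.symm (hS : G.IsSeparator S a b) : G.IsSeparator S b a :=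
  ⟨hS.2.1, hS.1, fun h => hS.2.2 h.symm⟩

lemma isSeparator_comm : G.IsSeparator S a b ↔ G.IsSeparator S b a :=
  ⟨.symm, .symm⟩

lemma IsMinimalSeparator.symm (hS : G.IsMinimalSeparator S a b) :
    G.IsMinimalSeparator S b a := by
  simpa only [IsMinimalSeparator, isSeparator_comm] using hS

lemma isSeparator_compl_pair [DecidableEq V] (hne : a ≠ b) (hab : ¬G.Adj a b) :
    G.IsSeparator {a, b}ᶜ a b := by
  refine ⟨by simp, by simp, ?_⟩
  rintro ⟨_ | ⟨h, p⟩, hp⟩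
  · exact hne rfl
  · have := hp _ (List.mem_cons_of_mem _ p.start_mem_support)
    rw [Set.notMem_compl_iff, Set.mem_insert_iff, Set.mem_singleton_iff] at this
    rcases this with rfl | rfl
    exacts [h.ne rfl, hab h]

lemma IsSeparator.not_reachableAvoiding {u v : V} (hS : G.IsSeparator S a b)
    (hu : G.ReachableAvoiding S a u) (hv : G.ReachableAvoiding S b v) :
    ¬G.ReachableAvoiding S u v :=
  fun h => hS.2.2 (hu.trans (h.trans hv.symm))

lemma exists_minimal_isSeparator [Finite V] (hne : a ≠ b) (hab : ¬G.Adj a b) :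
    ∃ S, G.IsMinimalSeparator S a b := by
  classical
  exact exists_minimal_of_wellFoundedLT _ ⟨_, isSeparator_compl_pair hne hab⟩

lemma IsMinimalSeparator.reachableAvoiding_diff_singleton (hS : G.IsMinimalSeparator S a b)
    (hx : x ∈ S) : G.ReachableAvoiding (S \ {x}) a b := by
  by_contra h
  have := hS.2 ⟨fun ha => hS.1.1 ha.1, fun hb => hS.1.2.1 hb.1, h⟩ Set.sdiff_subset hx
  simp at this

lemma IsMinimalSeparator.exists_adj (hS : G.IsMinimalSeparator S a b) (hx : x ∈ S) :
    ∃ a', G.ReachableAvoiding S a a' ∧ G.Adj a' x := by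
  obtain ⟨p, hp⟩ := hS.reachableAvoiding_diff_singleton hx
  obtain ⟨d, hd, hd₁, hd₂⟩ := p.exists_boundary_dart {w | G.ReachableAvoiding S a w}
    (.refl hS.1.1) hS.1.2.2
  have hdS : d.snd ∈ S := by_contra fun h => hd₂ (hd₁.adj d.adj h)
  have hdx : d.snd = x := by
    by_contra h
    exact hp _ (p.dart_snd_mem_support_of_mem_darts hd) ⟨hdS, h⟩
  exact ⟨d.fst, hd₁, hdx ▸ d.adj⟩

lemma IsMinimalSeparator.exists_walk (hS : G.IsMinimalSeparator S a b) (hx : x ∈ S)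
    (hy : y ∈ S) :
    ∃ p : G.Walk x y, ∀ w ∈ p.support, w = x ∨ w = y ∨ G.ReachableAvoiding S a w := by
  obtain ⟨a₁, ha₁, hxa₁⟩ := hS.exists_adj hx
  obtain ⟨a₂, ha₂, hya₂⟩ := hS.exists_adj hy
  obtain ⟨q, hq⟩ := ha₁.exists_walk ha₂
  refine ⟨Walk.cons hxa₁.symm (q.concat hya₂), fun w hw => ?_⟩
  simp only [Walk.support_cons, Walk.support_concat, List.mem_cons, List.mem_append,
    List.not_mem_nil, or_false] at hw
  rcases hw with rfl | hw | rfl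
  exacts [.inl rfl, .inr (.inr (hq w hw)), .inr (.inl rfl)]

/-- Two non-adjacent vertices of the separator would be joined through either side by a
chordless path, and together these paths form a chordless cycle of length at least four. -/
theorem Chordal.isClique_of_isMinimalSeparator (hG : G.Chordal)
    (hS : G.IsMinimalSeparator S a b) : G.IsClique S := by
  intro x hx y hy hxy
  by_contra hadj
  obtain ⟨p, hp⟩ := hS.exists_walk hx hy
  obtain ⟨q, hq⟩ := hS.symm.exists_walk hx hy
  obtain ⟨P, hPpath, hPa, hP⟩ := p.exists_isPath_chordless _ hp
  obtain ⟨Q, hQpath, hQb, hQ⟩ := q.exists_isPath_chordless _ hq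
  have hPQ : ∀ w ∈ P.support, w ∈ Q.support → w = x ∨ w = y := by
    intro w hwP hwQ
    by_contra! hw
    have hwa := ((hPa w hwP).resolve_left hw.1).resolve_left hw.2
    have hwb := ((hQb w hwQ).resolve_left hw.1).resolve_left hw.2
    exact hS.1.2.2 (hwa.trans hwb.symm)
  have hcross : ∀ u ∈ P.support, ∀ v ∈ Q.support, G.Adj u v →
      s(u, v) ∈ P.edges ∨ s(u, v) ∈ Q.edges := by
    intro u hu v hv huv
    by_cases huQ : u ∈ Q.support
    · exact .inr (hQ u huQ v hv huv)
    by_cases hvP : v ∈ P.support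
    · exact .inl (hP u hu v hvP huv)
    have hua : G.ReachableAvoiding S a u := by
      rcases hPa u hu with rfl | rfl | h
      exacts [absurd Q.start_mem_support huQ, absurd Q.end_mem_support huQ, h]
    have hvb : G.ReachableAvoiding S b v := by
      rcases hQb v hv with rfl | rfl | h
      exacts [absurd P.start_mem_support hvP, absurd P.end_mem_support hvP, h]
    exact (hS.1.not_reachableAvoiding hua hvb
      (huv.reachableAvoiding hua.notMem_right hvb.notMem_right)).elim
  have hPlen := P.two_le_length_of_ne_of_notMem_edges hxy fun h => hadj (P.adj_of_mem_edges h)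
  have hQlen := Q.two_le_length_of_ne_of_notMem_edges hxy fun h => hadj (Q.adj_of_mem_edges h)
  obtain ⟨u, v, huv, hu, hv, hchord⟩ := hG x (P.append Q.reverse)
    (hPpath.isCycle_append_reverse hQpath hPQ hPlen) (by simp; omega)
  simp only [Walk.mem_support_append_iff, Walk.support_reverse, List.mem_reverse,
    Walk.edges_append, Walk.edges_reverse, List.mem_append, not_or] at hu hv hchord
  rcases hu with hu | hu <;> rcases hv with hv | hv
  · exact hchord.1 (hP u hu v hv huv)
  · exact (hcross u hu v hv huv).elim hchord.1 hchord.2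
  · rw [Sym2.eq_swap] at hchord
    exact (hcross v hv u hu huv.symm).elim hchord.1 hchord.2
  · exact hchord.2 (hQ u hu v hv huv)

theorem Chordal.comap {W : Type} {H : SimpleGraph W} (f : H ↪g G) (hG : G.Chordal) :
    H.Chordal := by
  intro v c hc hlen
  obtain ⟨x, y, hxy, hx, hy, he⟩ :=
    hG (f v) (c.map f.toHom) (hc.map f.injective) (by rwa [Walk.length_map])
  rw [Walk.support_map, List.mem_map] at hx hy
  obtain ⟨x, hx, rfl⟩ := hx
  obtain ⟨y, hy, rfl⟩ := hy
  refine ⟨x, y, f.map_rel_iff.mp hxy, hx, hy, fun h => he ?_⟩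
  rw [Walk.edges_map]
  exact List.mem_map_of_mem h

def IsSimplicial (G : SimpleGraph V) (v : V) : Prop :=
  G.IsClique (G.neighborSet v)

lemma IsSimplicial.of_induce {T : Set V} {u : T} (hu : (G.induce T).IsSimplicial u)
    (hN : G.neighborSet u ⊆ T) : G.IsSimplicial u :=
  fun x hx y hy hxy => hu (x := ⟨x, hN hx⟩) hx (y := ⟨y, hN hy⟩) hy
    fun h => hxy (congrArg Subtype.val h)

lemma IsSimplicial.of_induce_union {c : V} {u : ↥({w | G.ReachableAvoiding S c w} ∪ S)}
    (hu : (G.induce _).IsSimplicial u) (huS : ↑u ∉ S) :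
    G.ReachableAvoiding S c u ∧ G.IsSimplicial u := by
  have hcu : G.ReachableAvoiding S c u := u.2.resolve_right huS
  refine ⟨hcu, hu.of_induce fun x hx => ?_⟩
  by_cases hxS : x ∈ S
  exacts [.inr hxS, .inl (hcu.adj hx hxS)]

/-- If `G` is not complete, a minimal separator `S₀` of two non-adjacent vertices is a clique;
induction on either side of `S₀` gives a simplicial vertex on each side, and these two are not
adjacent, so they do not both lie in the clique `S`. -/
theorem Chordal.exists_isSimplicial_notMem [Finite V] (hG : G.Chordal) {v : V}
    (hS : G.IsClique S) (hv : v ∉ S) : ∃ u ∉ S, G.IsSimplicial u := by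
  induction hn : Nat.card V using Nat.strong_induction_on generalizing V with
  | _ n ih =>
  by_cases hcomplete : ∀ a b : V, a ≠ b → G.Adj a b
  · exact ⟨v, hv, fun x _ y _ hxy => hcomplete x y hxy⟩
  push Not at hcomplete
  obtain ⟨a, b, hne, hab⟩ := hcomplete
  obtain ⟨S₀, hS₀⟩ := exists_minimal_isSeparator hne hab
  have side : ∀ {c d}, G.IsMinimalSeparator S₀ c d →
      ∃ u, G.ReachableAvoiding S₀ c u ∧ G.IsSimplicial u := by
    intro c d hcd
    set T : Set V := {w | G.ReachableAvoiding S₀ c w} ∪ S₀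
    have hdT : d ∉ T := by
      rintro (hd | hd)
      exacts [hcd.1.2.2 hd, hcd.1.2.1 hd]
    obtain ⟨u, huS, hu⟩ :=
      ih _ (hn ▸ Finite.card_subtype_lt hdT) (hG.comap (Embedding.induce T))
        (S := Subtype.val ⁻¹' S₀) (v := ⟨c, .inl (.refl hcd.1.1)⟩)
        (fun x hx y hy hxy => (hG.isClique_of_isMinimalSeparator hcd) hx hy
          fun h => hxy (Subtype.ext h))
        hcd.1.1 rfl
    exact ⟨u, hu.of_induce_union huS⟩
  obtain ⟨u, hau, hu⟩ := side hS₀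
  obtain ⟨w, hbw, hw⟩ := side hS₀.symm
  have huw := hS₀.1.not_reachableAvoiding hau hbw
  by_cases huS : u ∈ S
  · refine ⟨w, fun hwS => ?_, hw⟩
    have hne : u ≠ w := fun h => huw (h ▸ .refl hau.notMem_right)
    exact huw ((hS huS hwS hne).reachableAvoiding hau.notMem_right hbw.notMem_right)
  · exact ⟨u, huS, hu⟩

lemma IsSimplicial.isClique_closedNbhd {v : V} (hv : G.IsSimplicial v) :
    G.IsClique (G.closedNbhd v) :=
  isClique_insert.mpr ⟨hv, fun _ h _ => h⟩

lemma cliqueCoverNum_le_card {K : Finset (Finset V)} (hK : G.IsCliqueCover K) :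
    G.cliqueCoverNum ≤ K.card :=
  Nat.sInf_le ⟨K, hK, rfl⟩

lemma exists_isCliqueCover_card_eq [Finite V] :
    ∃ K, G.IsCliqueCover K ∧ K.card = G.cliqueCoverNum := by
  classical
  have := Fintype.ofFinite V
  have hcover : G.IsCliqueCover (Finset.univ.image ({·})) :=
    ⟨by simp, fun v => ⟨{v}, by simp, by simp⟩⟩
  exact Nat.sInf_mem (s := {n | ∃ K, G.IsCliqueCover K ∧ K.card = n}) ⟨_, _, hcover, rfl⟩

lemma bddAbove_card_isIndepSet' [Finite V] :
    BddAbove {n | ∃ s : Finset V, G.IsIndepSet' ↑s ∧ s.card = n} := by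
  have := Fintype.ofFinite V
  exact ⟨Fintype.card V, by rintro _ ⟨s, -, rfl⟩; exact s.card_le_univ⟩

lemma exists_isIndepSet'_card_eq [Finite V] :
    ∃ s : Finset V, G.IsIndepSet' ↑s ∧ s.card = G.indepNum' := by
  refine Nat.sSup_mem ?_ G.bddAbove_card_isIndepSet'
  exact ⟨0, ∅, by simp [IsIndepSet'], rfl⟩

/-- The cliques through distinct vertices of an independent set are distinct. -/
lemma IsIndepSet'.card_le_card {s : Finset V} {K : Finset (Finset V)} (hs : G.IsIndepSet' ↑s)
    (hK : G.IsCliqueCover K) : s.card ≤ K.card := by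
  choose f hfK hf using hK.2
  refine Finset.card_le_card_of_injOn f (fun v _ => hfK v) fun v hv w hw hfvw => ?_
  by_contra hvw
  exact hs hv hw hvw (hK.1 _ (hfK v) (hf v) (hfvw ▸ hf w) hvw)

lemma indepNum'_le_cliqueCoverNum [Finite V] : G.indepNum' ≤ G.cliqueCoverNum := by
  obtain ⟨s, hs, hs_card⟩ := G.exists_isIndepSet'_card_eq
  obtain ⟨K, hK, hK_card⟩ := G.exists_isCliqueCover_card_eq
  exact hs_card ▸ hK_card ▸ hs.card_le_card hK

lemma cliqueCoverNum_le_induce_compl_add_one [Finite V] {s : Set V} (hs : G.IsClique s) :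
    G.cliqueCoverNum ≤ (G.induce sᶜ).cliqueCoverNum + 1 := by
  classical
  have := Fintype.ofFinite V
  obtain ⟨K, hK, hK_card⟩ := (G.induce sᶜ).exists_isCliqueCover_card_eq
  set K' := insert s.toFinset (K.image (Finset.map (Function.Embedding.subtype _)))
  have hK' : G.IsCliqueCover K' := by
    refine ⟨fun t ht => ?_, fun v => ?_⟩
    · rcases Finset.mem_insert.mp ht with rfl | ht
      · simpa using hs
      obtain ⟨t, htK, rfl⟩ := Finset.mem_image.mp ht
      simpa [isClique_induce_iff] using hK.1 t htK
    · by_cases hv : v ∈ s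
      · exact ⟨s.toFinset, Finset.mem_insert_self _ _, by simpa using hv⟩
      obtain ⟨t, ht, hvt⟩ := hK.2 ⟨v, hv⟩
      exact ⟨_, Finset.mem_insert_of_mem (Finset.mem_image_of_mem _ ht),
        Finset.mem_map_of_mem _ hvt⟩
  calc G.cliqueCoverNum ≤ K'.card := G.cliqueCoverNum_le_card hK'
    _ ≤ K.card + 1 := (Finset.card_insert_le _ _).trans (by simpa using Finset.card_image_le)
    _ = _ := by rw [hK_card]

lemma indepNum'_induce_compl_closedNbhd_add_one_le [Finite V] (v : V) :
    (G.induce (G.closedNbhd v)ᶜ).indepNum' + 1 ≤ G.indepNum' := by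
  classical
  obtain ⟨s, hs, hs_card⟩ := (G.induce (G.closedNbhd v)ᶜ).exists_isIndepSet'_card_eq
  set s' := insert v (s.map (Function.Embedding.subtype _))
  have hv : v ∉ s.map (Function.Embedding.subtype _) := fun h => by
    obtain ⟨w, -, hw⟩ := Finset.mem_map.mp h
    exact w.2 (.inl hw)
  have hs' : G.IsIndepSet' ↑s' := by
    rw [IsIndepSet', Finset.coe_insert, Set.pairwise_insert]
    refine ⟨?_, fun b hb _ => ?_⟩
    · rintro _ hx _ hy hxy
      obtain ⟨x, hxs, rfl⟩ := Finset.mem_map.mp hx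
      obtain ⟨y, hys, rfl⟩ := Finset.mem_map.mp hy
      exact hs hxs hys fun h => hxy (congrArg Subtype.val h)
    · obtain ⟨w, -, rfl⟩ := Finset.mem_map.mp hb
      exact ⟨fun hadj => w.2 (.inr hadj), fun hadj => w.2 (.inr hadj.symm)⟩
  calc _ = s'.card := by rw [Finset.card_insert_of_notMem hv, Finset.card_map, hs_card]
    _ ≤ G.indepNum' := le_csSup G.bddAbove_card_isIndepSet' ⟨s', hs', rfl⟩

theorem Chordal.cliqueCoverNum_le_indepNum' [Finite V] (hG : G.Chordal) :
    G.cliqueCoverNum ≤ G.indepNum' := by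
  induction hn : Nat.card V using Nat.strong_induction_on generalizing V with
  | _ n ih =>
  rcases isEmpty_or_nonempty V with hV | ⟨⟨v⟩⟩
  · exact (G.cliqueCoverNum_le_card (K := ∅) ⟨by simp, isEmptyElim⟩).trans (Nat.zero_le _)
  obtain ⟨u, -, hu⟩ := hG.exists_isSimplicial_notMem isClique_empty (Set.notMem_empty v)
  have hN : Nat.card ↥(G.closedNbhd u)ᶜ < n :=
    hn ▸ Finite.card_subtype_lt (x := u) (by simp [closedNbhd])
  calc G.cliqueCoverNum ≤ (G.induce (G.closedNbhd u)ᶜ).cliqueCoverNum + 1 :=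
        G.cliqueCoverNum_le_induce_compl_add_one hu.isClique_closedNbhd
    _ ≤ (G.induce (G.closedNbhd u)ᶜ).indepNum' + 1 :=
        Nat.add_le_add_right (ih _ hN (hG.comap (Embedding.induce _)) rfl) 1
    _ ≤ G.indepNum' := G.indepNum'_induce_compl_closedNbhd_add_one_le u

end SimpleGraph

/-- Every finite chordal graph has clique cover number equal to its independence number. -/
theorem cliqueCoverNum_eq_indepNum_of_chordal {V : Type} [Fintype V]
    (G : SimpleGraph V) (hG : G.Chordal) :
    G.cliqueCoverNum = G.indepNum' :=
  le_antisymm hG.cliqueCoverNum_le_indepNum' G.indepNum'_le_cliqueCoverNum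
end

section
/- Let G be a finite simple graph and let Z be a finite collection of pairs (U_i, {a_i, b_i}) where U_i is a set of vertices of G and a_i, b_i are vertices that are equal or adjacent in G and satisfy N[a_i] ⊆ N[b_i] or N[b_i] ⊆ N[a_i]. Then for every clique cover K of G there exists a clique cover M of G with |M| ≤ |K| such that for every i some clique of M contains both a_i and b_i; in particular, M satisfies all zipper constraints in Z. -/
/-!
If `N[a] ⊆ N[b]`, every clique through `a` stays a clique when `b` is added to it. Adding `b`
to all cliques containing `a` therefore gives a clique cover with no more cliques, in which `a`
and `b` share a clique and every pair that shared a clique still does. Doing this once per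
constraint repairs all of them.
-/

namespace SimpleGraph

variable {V : Type} {G : SimpleGraph V}

def Joins (M : Finset (Finset V)) (x y : V) : Prop :=
  ∃ s ∈ M, x ∈ s ∧ y ∈ s

theorem Joins.symm {M : Finset (Finset V)} {x y : V} (h : Joins M x y) : Joins M y x :=
  let ⟨s, hs, hx, hy⟩ := h
  ⟨s, hs, hy, hx⟩

theorem Joins.image {M : Finset (Finset V)} {f : Finset V → Finset V} [DecidableEq V]
    (hf : ∀ s ∈ M, s ⊆ f s) {x y : V} (h : Joins M x y) : Joins (M.image f) x y :=
  let ⟨s, hs, hx, hy⟩ := h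
  ⟨f s, Finset.mem_image_of_mem f hs, hf s hs hx, hf s hs hy⟩

theorem IsCliqueCover.image {M : Finset (Finset V)} {f : Finset V → Finset V} [DecidableEq V]
    (hM : G.IsCliqueCover M) (hf : ∀ s ∈ M, s ⊆ f s)
    (hclique : ∀ s ∈ M, G.IsClique (f s : Set V)) :
    G.IsCliqueCover (M.image f) := by
  refine ⟨Finset.forall_mem_image.2 hclique, fun v => ?_⟩
  obtain ⟨s, hs, hv⟩ := hM.2 v
  exact ⟨f s, Finset.mem_image_of_mem f hs, hf s hs hv⟩

theorem isClique_insert_of_closedNbhd_subset {s : Set V} {a b : V} (hs : G.IsClique s)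
    (ha : a ∈ s) (hab : G.closedNbhd a ⊆ G.closedNbhd b) : G.IsClique (insert b s) := by
  refine hs.insert fun w hw hwb => ?_
  have hwa : w ∈ G.closedNbhd a := by
    by_cases h : w = a
    · exact Or.inl h
    · exact Or.inr (hs ha hw (Ne.symm h))
  exact (hab hwa).resolve_left hwb.symm

theorem IsCliqueCover.exists_joins_of_closedNbhd_subset {M : Finset (Finset V)} {a b : V}
    (hM : G.IsCliqueCover M) (hab : G.closedNbhd a ⊆ G.closedNbhd b) :
    ∃ M' : Finset (Finset V), G.IsCliqueCover M' ∧ M'.card ≤ M.card ∧ Joins M' a b ∧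
      ∀ x y, Joins M x y → Joins M' x y := by
  classical
  set f : Finset V → Finset V := fun s => if a ∈ s then insert b s else s
  have hf : ∀ s ∈ M, s ⊆ f s := fun s _ => by
    by_cases ha : a ∈ s <;> simp [f, ha, Finset.subset_insert]
  have hclique : ∀ s ∈ M, G.IsClique (f s : Set V) := fun s hs => by
    by_cases ha : a ∈ s
    · simpa [f, ha] using isClique_insert_of_closedNbhd_subset (hM.1 s hs) ha hab
    · simpa [f, ha] using hM.1 s hs
  obtain ⟨s, hs, has⟩ := hM.2 a
  refine ⟨M.image f, hM.image hf hclique, Finset.card_image_le, ?_, fun x y => Joins.image hf⟩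
  exact ⟨f s, Finset.mem_image_of_mem f hs, hf s hs has, by simp [f, has]⟩

theorem IsCliqueCover.exists_joins_of_closedNbhd_comparable {M : Finset (Finset V)} {a b : V}
    (hM : G.IsCliqueCover M)
    (hab : G.closedNbhd a ⊆ G.closedNbhd b ∨ G.closedNbhd b ⊆ G.closedNbhd a) :
    ∃ M' : Finset (Finset V), G.IsCliqueCover M' ∧ M'.card ≤ M.card ∧ Joins M' a b ∧
      ∀ x y, Joins M x y → Joins M' x y := by
  rcases hab with hab | hba
  · exact hM.exists_joins_of_closedNbhd_subset hab
  · obtain ⟨M', hM', hcard, hjoin, hmono⟩ := hM.exists_joins_of_closedNbhd_subset hba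
    exact ⟨M', hM', hcard, hjoin.symm, hmono⟩

theorem IsCliqueCover.exists_joins_all {ι : Type} {K : Finset (Finset V)}
    (hK : G.IsCliqueCover K) (a b : ι → V) (S : Finset ι)
    (hcomp : ∀ i ∈ S, G.closedNbhd (a i) ⊆ G.closedNbhd (b i) ∨
      G.closedNbhd (b i) ⊆ G.closedNbhd (a i)) :
    ∃ M : Finset (Finset V), G.IsCliqueCover M ∧ M.card ≤ K.card ∧
      ∀ i ∈ S, Joins M (a i) (b i) := by
  classical
  induction S using Finset.induction_on with
  | empty => exact ⟨K, hK, le_rfl, by simp⟩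
  | @insert j S _ ih =>
    obtain ⟨M, hM, hcard, hjoins⟩ := ih fun i hi => hcomp i (Finset.mem_insert_of_mem hi)
    obtain ⟨M', hM', hcard', hj, hmono⟩ :=
      hM.exists_joins_of_closedNbhd_comparable (hcomp j (Finset.mem_insert_self j S))
    refine ⟨M', hM', hcard'.trans hcard, (Finset.forall_mem_insert _ _ _).2 ⟨hj, ?_⟩⟩
    exact fun i hi => hmono _ _ (hjoins i hi)

end SimpleGraph

theorem cliqueCover_repair_general {V : Type} (G : SimpleGraph V)
    {ι : Type} [Finite ι] (U : ι → Set V) (a b : ι → V)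
    (hnbhd : ∀ i : ι, G.closedNbhd (a i) ⊆ G.closedNbhd (b i) ∨
      G.closedNbhd (b i) ⊆ G.closedNbhd (a i)) :
    ∀ K : Finset (Finset V), G.IsCliqueCover K →
      ∃ M : Finset (Finset V), G.IsCliqueCover M ∧ M.card ≤ K.card ∧
        (∀ i : ι, ∃ s ∈ M, a i ∈ s ∧ b i ∈ s) ∧
        (∀ i : ι, (∃ s ∈ M, U i ⊆ ↑s) → ∃ s ∈ M, a i ∈ s ∧ b i ∈ s) := by
  intro K hK
  have := Fintype.ofFinite ι
  obtain ⟨M, hM, hcard, hjoins⟩ :=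
    hK.exists_joins_all a b Finset.univ fun i _ => hnbhd i
  have hall : ∀ i, SimpleGraph.Joins M (a i) (b i) := fun i => hjoins i (Finset.mem_univ i)
  exact ⟨M, hM, hcard, hall, fun i _ => hall i⟩

/-- Repairing zipper constraints: if every zipper-constraint target is a pair of
equal-or-adjacent vertices with comparable closed neighborhoods, then any clique cover `K`
can be turned into a clique cover `M` with `|M| ≤ |K|` in which, for every constraint,
some clique contains both target vertices; in particular `M` satisfies all the zipper
constraints. -/
theorem cliqueCover_repair {V : Type} [Fintype V] [DecidableEq V] (G : SimpleGraph V)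
    {ι : Type} [Finite ι] (U : ι → Set V) (a b : ι → V)
    (hab : ∀ i : ι, a i = b i ∨ G.Adj (a i) (b i))
    (hnbhd : ∀ i : ι, G.closedNbhd (a i) ⊆ G.closedNbhd (b i) ∨
      G.closedNbhd (b i) ⊆ G.closedNbhd (a i)) :
    ∀ K : Finset (Finset V), G.IsCliqueCover K →
      ∃ M : Finset (Finset V), G.IsCliqueCover M ∧ M.card ≤ K.card ∧
        (∀ i : ι, ∃ s ∈ M, a i ∈ s ∧ b i ∈ s) ∧
        (∀ i : ι, (∃ s ∈ M, U i ⊆ ↑s) → ∃ s ∈ M, a i ∈ s ∧ b i ∈ s) :=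
  cliqueCover_repair_general G U a b hnbhd
end

section
/- Let G be a finite simple graph and let Z be a finite collection of pairs (U_i, {a_i, b_i}) where U_i is a set of vertices of G and a_i, b_i are vertices that are equal or adjacent in G and satisfy N[a_i] ⊆ N[b_i] or N[b_i] ⊆ N[a_i]. Then the minimum size of a clique cover of G that satisfies all zipper constraints in Z equals the clique cover number of G (i.e., the zipper constraints cost nothing). -/
/-!
Enlarge every clique `s` of a clique cover to the set of all vertices `y` whose closed
neighborhood contains that of some `x ∈ s`. This set is still a clique: if `y` dominates `x ∈ s`
and `z` dominates some vertex of `s`, then `x ∈ N[z]`, hence `z ∈ N[x] ⊆ N[y]`. The enlarged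
cover has no more cliques, and whenever `N[a] ⊆ N[b]`, the enlarged clique through `a` contains
`b`, so every zipper constraint is met unconditionally.
-/

namespace SimpleGraph

variable {V : Type} (G : SimpleGraph V)

lemma mem_closedNbhd_comm {v w : V} : w ∈ G.closedNbhd v ↔ v ∈ G.closedNbhd w := by
  simp only [closedNbhd, Set.mem_ofPred_eq, eq_comm, G.adj_comm]

def dominationClosure (s : Set V) : Set V :=
  {y | ∃ x ∈ s, G.closedNbhd x ⊆ G.closedNbhd y}

variable {G}

lemma IsClique.subset_closedNbhd {s : Set V} (hs : G.IsClique s) {x : V}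
    (hx : x ∈ s) : s ⊆ G.closedNbhd x := by
  intro w hw
  by_cases hwx : w = x
  · exact Or.inl hwx
  · exact Or.inr (hs hx hw (Ne.symm hwx))

lemma IsClique.dominationClosure {s : Set V} (hs : G.IsClique s) :
    G.IsClique (G.dominationClosure s) := by
  have hsub : ∀ z ∈ G.dominationClosure s, s ⊆ G.closedNbhd z := fun z ⟨x, hx, hxz⟩ =>
    (hs.subset_closedNbhd hx).trans hxz
  intro y ⟨x, hx, hxy⟩ z hz hyz
  have hzx : z ∈ G.closedNbhd x := (G.mem_closedNbhd_comm).1 (hsub z hz hx)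
  exact (hxy hzx).resolve_left (Ne.symm hyz)

lemma IsCliqueCover.finite {K : Finset (Finset V)} (hK : G.IsCliqueCover K) : Finite V := by
  refine Set.finite_univ_iff.1 ((K.finite_toSet.biUnion fun s _ => s.finite_toSet).subset ?_)
  intro v _
  obtain ⟨s, hs, hv⟩ := hK.2 v
  exact Set.mem_biUnion hs hv

lemma IsCliqueCover.exists_card_le_comparable_mem {K : Finset (Finset V)}
    (hK : G.IsCliqueCover K) :
    ∃ K' : Finset (Finset V), G.IsCliqueCover K' ∧ K'.card ≤ K.card ∧
      ∀ x y : V, G.closedNbhd x ⊆ G.closedNbhd y ∨ G.closedNbhd y ⊆ G.closedNbhd x →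
        ∃ s ∈ K', x ∈ s ∧ y ∈ s := by
  classical
  have := hK.finite
  have := Fintype.ofFinite V
  let close : Finset V → Finset V := fun s => (G.dominationClosure (s : Set V)).toFinset
  have mem_close : ∀ s, ∀ x ∈ s, ∀ y, G.closedNbhd x ⊆ G.closedNbhd y → y ∈ close s :=
    fun s x hx y hxy => Set.mem_toFinset.2 ⟨x, hx, hxy⟩
  have dominated :
      ∀ x y, G.closedNbhd x ⊆ G.closedNbhd y → ∃ s ∈ K.image close, x ∈ s ∧ y ∈ s := by
    intro x y hxy
    obtain ⟨s, hs, hx⟩ := hK.2 x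
    exact ⟨close s, Finset.mem_image_of_mem _ hs, mem_close s x hx x subset_rfl,
      mem_close s x hx y hxy⟩
  refine ⟨K.image close, ⟨?_, fun v => ?_⟩, Finset.card_image_le, ?_⟩
  · simp only [Finset.mem_image, forall_exists_index, and_imp]
    rintro _ s hs rfl
    simpa [close] using (hK.1 s hs).dominationClosure
  · obtain ⟨s, hs, -, hv⟩ := dominated v v subset_rfl
    exact ⟨s, hs, hv⟩
  · rintro x y (hxy | hyx)
    · exact dominated x y hxy
    · obtain ⟨s, hs, hy, hx⟩ := dominated y x hyx
      exact ⟨s, hs, hx, hy⟩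

end SimpleGraph

theorem zippedCliqueCoverNum_eq_cliqueCoverNum_general {V : Type}
    (G : SimpleGraph V) {ι : Type} (U : ι → Set V) (a b : ι → V)
    (hnbhd : ∀ i : ι, G.closedNbhd (a i) ⊆ G.closedNbhd (b i) ∨
      G.closedNbhd (b i) ⊆ G.closedNbhd (a i)) :
    sInf {n | ∃ K : Finset (Finset V), G.IsCliqueCover K ∧
        (∀ i : ι, (∃ s ∈ K, U i ⊆ ↑s) → ∃ s ∈ K, a i ∈ s ∧ b i ∈ s) ∧ K.card = n} =
      G.cliqueCoverNum := by
  refine csInf_eq_csInf_of_forall_exists_le ?_ ?_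
  · rintro _ ⟨K, hK, -, rfl⟩
    exact ⟨K.card, ⟨K, hK, rfl⟩, le_rfl⟩
  · rintro _ ⟨K, hK, rfl⟩
    obtain ⟨K', hK', hcard, hpairs⟩ := hK.exists_card_le_comparable_mem
    exact ⟨K'.card, ⟨K', hK', fun i _ => hpairs (a i) (b i) (hnbhd i), rfl⟩, hcard⟩

/-- If every zipper-constraint target is a pair of equal-or-adjacent vertices with
comparable closed neighborhoods, then the minimum size of a clique cover satisfying all
the zipper constraints equals the (unconstrained) clique cover number. -/
theorem zippedCliqueCoverNum_eq_cliqueCoverNum {V : Type} [Fintype V] [DecidableEq V]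
    (G : SimpleGraph V) {ι : Type} [Finite ι] (U : ι → Set V) (a b : ι → V)
    (hab : ∀ i : ι, a i = b i ∨ G.Adj (a i) (b i))
    (hnbhd : ∀ i : ι, G.closedNbhd (a i) ⊆ G.closedNbhd (b i) ∨
      G.closedNbhd (b i) ⊆ G.closedNbhd (a i)) :
    sInf {n | ∃ K : Finset (Finset V), G.IsCliqueCover K ∧
        (∀ i : ι, (∃ s ∈ K, U i ⊆ ↑s) → ∃ s ∈ K, a i ∈ s ∧ b i ∈ s) ∧ K.card = n} =
      G.cliqueCoverNum :=
  zippedCliqueCoverNum_eq_cliqueCoverNum_general G U a b hnbhd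
end

section
/- A finite simple graph G is isomorphic to the compatibility graph G_F of some deterministic filter F if and only if G either has at least two connected components or is a complete graph. -/
/-- A deterministic (combinatorial) filter: states `S`, observations `Y`, outputs `C`,
an initial state, a partial transition function and an output function. -/
structure DFilter (S Y C : Type) where
  init : S
  tr : S → Y → Option S
  out : S → C

namespace DFilter

variable {S Y C : Type}

/-- Trace an observation sequence from a state (`none` if it crashes). -/
def run (F : DFilter S Y C) : S → List Y → Option S
  | v, [] => some v
  | v, y :: ys => (F.tr v y).bind fun w => F.run w ys

/-- The extensions of a state: observation sequences traceable from it. -/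
def Ext (F : DFilter S Y C) (v : S) : Set (List Y) :=
  {s | (F.run v s).isSome}

/-- The output sequence produced by tracing an observation sequence from a state,
reading the output at every visited state (starting with the output of the state itself). -/
def outs (F : DFilter S Y C) : S → List Y → Option (List C)
  | v, [] => some [F.out v]
  | v, y :: ys => (F.tr v y).bind fun w => (F.outs w ys).map (F.out v :: ·)

/-- Two states are compatible when the outputs they produce agree on all common extensions. -/
def Compatible (F : DFilter S Y C) (v w : S) : Prop :=
  ∀ s : List Y, s ∈ F.Ext v → s ∈ F.Ext w → F.outs v s = F.outs w s

/-- The compatibility graph: edges join distinct compatible states. -/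
def compatGraph (F : DFilter S Y C) : SimpleGraph S where
  Adj v w := v ≠ w ∧ F.Compatible v w
  symm := by
    constructor
    rintro v w ⟨hne, hc⟩
    exact ⟨hne.symm, fun s hw hv => (hc s hv hw).symm⟩
  loopless := ⟨fun v h => h.1 rfl⟩

/-- A filter is globally language comparable (GLC) when the extension sets of any two
compatible states are comparable under inclusion. -/
def GLC (F : DFilter S Y C) : Prop :=
  ∀ v w : S, F.Compatible v w → F.Ext v ⊆ F.Ext w ∨ F.Ext w ⊆ F.Ext v

/-- A filter is neighborhood comparable (NC) when any two vertices of its compatibility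
graph with intersecting closed neighborhoods have comparable closed neighborhoods. -/
def NC (F : DFilter S Y C) : Prop :=
  ∀ v w : S, (F.compatGraph.closedNbhd v ∩ F.compatGraph.closedNbhd w).Nonempty →
    F.compatGraph.closedNbhd v ⊆ F.compatGraph.closedNbhd w ∨
      F.compatGraph.closedNbhd w ⊆ F.compatGraph.closedNbhd v

/-- The target set of the determinism-enforcing zipper constraint generated by a
set of states `U` and an observation `y`: all `y`-children of members of `U`. -/
def zipTarget (F : DFilter S Y C) (U : Set S) (y : Y) : Set S :=
  {w | ∃ u ∈ U, F.tr u y = some w}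

/-- A set of mutually compatible states. -/
def MutuallyCompatible (F : DFilter S Y C) (U : Set S) : Prop :=
  ∀ u ∈ U, ∀ u' ∈ U, F.Compatible u u'

end DFilter

/-!
Adjacent states of a filter agree on the empty extension, so their outputs coincide; hence the
output is constant on each connected component of `G_F`. If `G_F` is connected, all states have
the same output, every output sequence is a constant list, and any two states are compatible:
`G_F` is complete.

Conversely, a graph `G` is realized on its own vertex set with outputs the connected components.
An observation `inl x` jumps from any state to `x`, which makes every state reachable and lets
adjacent states share all extensions starting with it. An observation `inr (a, b)` for
non-adjacent `a`, `b` is traceable only from `a` and `b`, and sends them to two states in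
different components of `G`; such components exist unless `G` is complete, in which case these
observations are never traceable.
-/

namespace DFilter

variable {S Y C : Type} (F : DFilter S Y C)

lemma nil_mem_Ext (v : S) : ([] : List Y) ∈ F.Ext v := rfl

lemma cons_mem_Ext_iff {v : S} {y : Y} {s : List Y} :
    y :: s ∈ F.Ext v ↔ ∃ w, F.tr v y = some w ∧ s ∈ F.Ext w := by
  simp only [Ext, Set.mem_ofPred_eq, run, Option.isSome_bind]
  cases F.tr v y <;> simp

lemma out_eq_of_compatible {v w : S} (h : F.Compatible v w) : F.out v = F.out w := by
  simpa [outs] using h [] (F.nil_mem_Ext v) (F.nil_mem_Ext w)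

lemma out_eq_of_reachable {v w : S} (h : F.compatGraph.Reachable v w) : F.out v = F.out w := by
  obtain ⟨p⟩ := h
  induction p with
  | nil => rfl
  | cons hadj _ ih => exact (F.out_eq_of_compatible hadj.2).trans ih

lemma compatible_of_out_eq (hout : ∀ v w, F.out v = F.out w) (v w : S) : F.Compatible v w := by
  intro s
  induction s generalizing v w with
  | nil => simp [outs, hout v w]
  | cons y s ih =>
    intro hv hw
    obtain ⟨v', hv', hsv⟩ := F.cons_mem_Ext_iff.1 hv
    obtain ⟨w', hw', hsw⟩ := F.cons_mem_Ext_iff.1 hw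
    simp [outs, hv', hw', ih v' w' hsv hsw, hout v w]

lemma compatGraph_eq_top_of_preconnected (h : F.compatGraph.Preconnected) :
    F.compatGraph = ⊤ := by
  ext v w
  exact ⟨fun hvw => hvw.1,
    fun hne => ⟨hne, F.compatible_of_out_eq (fun a b => F.out_eq_of_reachable (h a b)) v w⟩⟩

end DFilter

namespace SimpleGraph

variable {V W : Type}

lemma Iso.eq_top_of_eq_top {G : SimpleGraph V} {H : SimpleGraph W} (e : G ≃g H) (h : H = ⊤) :
    G = ⊤ := by
  subst h
  ext u v
  rw [← e.map_adj_iff, top_adj, top_adj, e.injective.ne_iff]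

open Classical in
noncomputable def realizingFilter (G : SimpleGraph V) (r₁ r₂ : V) :
    DFilter V (V ⊕ V × V) G.ConnectedComponent where
  init := r₁
  tr u
    | .inl x => some x
    | .inr (a, b) =>
      if ¬G.Adj a b ∧ u = a then some r₁ else if ¬G.Adj a b ∧ u = b then some r₂ else none
  out := G.connectedComponentMk

variable {G : SimpleGraph V} {r₁ r₂ : V}

lemma realizingFilter_run_inl (u x : V) :
    (G.realizingFilter r₁ r₂).run u [.inl x] = some x := rfl

lemma realizingFilter_tr_inr_eq_some {u a b x : V}
    (h : (G.realizingFilter r₁ r₂).tr u (.inr (a, b)) = some x) :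
    ¬G.Adj a b ∧ (u = a ∨ u = b) := by
  simp only [realizingFilter] at h
  split_ifs at h with ha hb
  · exact ⟨ha.1, .inl ha.2⟩
  · exact ⟨hb.1, .inr hb.2⟩

lemma realizingFilter_compatible_of_adj {v w : V} (hadj : G.Adj v w) :
    (G.realizingFilter r₁ r₂).Compatible v w := by
  have hcomp : G.connectedComponentMk v = G.connectedComponentMk w :=
    ConnectedComponent.sound hadj.reachable
  rintro (_ | ⟨_ | ⟨a, b⟩, s⟩) hv hw
  · simp [DFilter.outs, realizingFilter, hcomp]
  · simp [DFilter.outs, realizingFilter, hcomp]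
  · obtain ⟨_, hv, -⟩ := DFilter.cons_mem_Ext_iff _ |>.1 hv
    obtain ⟨_, hw, -⟩ := DFilter.cons_mem_Ext_iff _ |>.1 hw
    obtain ⟨hab, hv⟩ := realizingFilter_tr_inr_eq_some hv
    obtain ⟨-, hw⟩ := realizingFilter_tr_inr_eq_some hw
    rcases hv with rfl | rfl <;> rcases hw with rfl | rfl
    exacts [(hadj.ne rfl).elim, (hab hadj).elim, (hab hadj.symm).elim, (hadj.ne rfl).elim]

lemma realizingFilter_not_compatible (hr : ¬G.Reachable r₁ r₂) {v w : V} (hne : v ≠ w)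
    (hnadj : ¬G.Adj v w) : ¬(G.realizingFilter r₁ r₂).Compatible v w := by
  intro hcomp
  have hv : [.inr (v, w)] ∈ (G.realizingFilter r₁ r₂).Ext v := by
    simp [DFilter.Ext, DFilter.run, realizingFilter, hnadj]
  have hw : [.inr (v, w)] ∈ (G.realizingFilter r₁ r₂).Ext w := by
    simp [DFilter.Ext, DFilter.run, realizingFilter, hnadj, hne.symm]
  have houts : G.Reachable v w ∧ G.Reachable r₁ r₂ := by
    simpa [DFilter.outs, realizingFilter, hnadj, hne.symm] using hcomp _ hv hw
  exact hr houts.2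

lemma compatGraph_realizingFilter (hr : G = ⊤ ∨ ¬G.Reachable r₁ r₂) :
    (G.realizingFilter r₁ r₂).compatGraph = G := by
  ext v w
  refine ⟨fun ⟨hne, hcomp⟩ => ?_, fun hadj => ⟨hadj.ne, realizingFilter_compatible_of_adj hadj⟩⟩
  by_contra hnadj
  rcases hr with rfl | hr
  · exact hnadj hne
  · exact realizingFilter_not_compatible hr hne hnadj hcomp

end SimpleGraph

open SimpleGraph in
/-- A finite nonempty simple graph `G` is isomorphic to the compatibility graph of some
deterministic filter (finite nonempty state set, finite nonempty observation set, every
state reachable from the initial state) if and only if `G` has at least two connected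
components or is a complete graph. -/
theorem realizable_compatGraph_iff {V : Type} [Fintype V] [Nonempty V]
    (G : SimpleGraph V) :
    (∃ (S Y C : Type) (F : DFilter S Y C), Finite S ∧ Nonempty S ∧ Finite Y ∧ Nonempty Y ∧
        (∀ v : S, ∃ s : List Y, F.run F.init s = some v) ∧
        Nonempty (G ≃g F.compatGraph)) ↔
      ((∃ c₁ c₂ : G.ConnectedComponent, c₁ ≠ c₂) ∨ G = ⊤) := by
  constructor
  · rintro ⟨S, Y, C, F, -, -, -, -, -, ⟨e⟩⟩
    refine or_iff_not_imp_left.2 fun hsingle => e.eq_top_of_eq_top ?_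
    exact F.compatGraph_eq_top_of_preconnected <| e.preconnected_iff.1 fun u v =>
      ConnectedComponent.exact <| not_not.1 fun hne => hsingle ⟨_, _, hne⟩
  · intro h
    obtain ⟨r₁, r₂, hr⟩ : ∃ r₁ r₂ : V, G = ⊤ ∨ ¬G.Reachable r₁ r₂ := by
      rcases h with ⟨c₁, c₂, hne⟩ | htop
      · induction c₁ using ConnectedComponent.ind
        induction c₂ using ConnectedComponent.ind
        exact ⟨_, _, .inr fun hr => hne (ConnectedComponent.sound hr)⟩
      · exact ⟨Classical.arbitrary V, Classical.arbitrary V, .inl htop⟩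
    refine ⟨V, V ⊕ V × V, G.ConnectedComponent, G.realizingFilter r₁ r₂, inferInstance,
      inferInstance, inferInstance, inferInstance, fun v => ⟨[.inl v], realizingFilter_run_inl _ v⟩,
      ?_⟩
    rw [compatGraph_realizingFilter hr]
    exact ⟨.refl⟩
end

section
/- If F is a globally language comparable (GLC) deterministic filter and v ∼ w are compatible states with Ext(v) ⊆ Ext(w), then every state compatible with w is also compatible with v; consequently, in the compatibility graph G_F the closed neighborhoods satisfy N[w] ⊆ N[v]. In particular, any two compatible states of a GLC filter have comparable closed neighborhoods in G_F. -/
namespace DFilter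

variable {S Y C : Type} {F : DFilter S Y C} {u v w : S}

theorem Compatible.refl (F : DFilter S Y C) (v : S) : F.Compatible v v :=
  fun _ _ _ => rfl

theorem Compatible.symm (h : F.Compatible v w) : F.Compatible w v :=
  fun s hw hv => (h s hv hw).symm

/-- Every common extension of `u` and `v` is one of `w`, so `w` mediates between them. -/
theorem Compatible.trans_of_ext_subset (huw : F.Compatible u w) (hwv : F.Compatible w v)
    (hsub : F.Ext v ⊆ F.Ext w) : F.Compatible u v := fun s hu hv =>
  (huw s hu (hsub hv)).trans (hwv s (hsub hv) hv)

theorem mem_closedNbhd_compatGraph : u ∈ F.compatGraph.closedNbhd v ↔ F.Compatible v u := by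
  by_cases h : u = v
  · subst h
    simp [SimpleGraph.closedNbhd, Compatible.refl]
  · simp [SimpleGraph.closedNbhd, compatGraph, h, Ne.symm h]

theorem closedNbhd_compatGraph_subset_of_ext_subset (hvw : F.Compatible v w)
    (hsub : F.Ext v ⊆ F.Ext w) : F.compatGraph.closedNbhd w ⊆ F.compatGraph.closedNbhd v :=
  fun _ hu => mem_closedNbhd_compatGraph.2 <|
    ((mem_closedNbhd_compatGraph.1 hu).symm.trans_of_ext_subset hvw.symm hsub).symm

end DFilter

/-- In a GLC filter, if `v ∼ w` with `Ext v ⊆ Ext w`, then every state compatible with `w`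
is compatible with `v`, hence `N[w] ⊆ N[v]` in the compatibility graph; in particular any
two compatible states have comparable closed neighborhoods in the compatibility graph. -/
theorem glc_closedNbhd_comparable {S Y C : Type} (F : DFilter S Y C) (hglc : F.GLC) :
    (∀ v w : S, F.Compatible v w → F.Ext v ⊆ F.Ext w →
      (∀ u : S, F.Compatible u w → F.Compatible u v) ∧
        F.compatGraph.closedNbhd w ⊆ F.compatGraph.closedNbhd v) ∧
    (∀ v w : S, F.Compatible v w →
      F.compatGraph.closedNbhd v ⊆ F.compatGraph.closedNbhd w ∨
        F.compatGraph.closedNbhd w ⊆ F.compatGraph.closedNbhd v) := by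
  have nbhd_subset := @DFilter.closedNbhd_compatGraph_subset_of_ext_subset _ _ _ F
  refine ⟨fun v w hvw hsub =>
    ⟨fun u huw => huw.trans_of_ext_subset hvw.symm hsub, nbhd_subset hvw hsub⟩, ?_⟩
  intro v w hvw
  rcases hglc v w hvw with hsub | hsub
  · exact Or.inr (nbhd_subset hvw hsub)
  · exact Or.inl (nbhd_subset hvw.symm hsub)
end

section
/- A deterministic filter F is neighborhood comparable (NC) if and only if its compatibility relation ∼ is transitive (and hence, being reflexive and symmetric, an equivalence relation on the states of F). -/
/-! Since compatibility is reflexive, the closed neighborhood of `v` in the compatibility graph is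
the set of states compatible with `v`. For a reflexive symmetric relation, "any two overlapping
neighborhoods are nested" is equivalent to transitivity: a common neighbor `b` of `a` and `c`
forces one of `a`, `c` into the other's neighborhood. -/

section NeighborhoodComparable

variable {α : Type*} (r : α → α → Prop) [Std.Refl r] [Std.Symm r]

theorem neighborhood_comparable_iff_transitive :
    (∀ v w, ({u | r v u} ∩ {u | r w u}).Nonempty →
      {u | r v u} ⊆ {u | r w u} ∨ {u | r w u} ⊆ {u | r v u}) ↔ Transitive r := by
  constructor
  · intro hcomp a b c hab hbc
    rcases hcomp a c ⟨b, hab, symm_of r hbc⟩ with hac | hca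
    · exact symm_of r (hac (refl_of r a))
    · exact hca (refl_of r c)
  · rintro htrans v w ⟨u, hvu, hwu⟩
    exact Or.inl fun x hvx => htrans (htrans hwu (symm_of r hvu)) hvx

end NeighborhoodComparable

namespace DFilter

variable {S Y C : Type} (F : DFilter S Y C)

instance : Std.Refl F.Compatible := ⟨fun _ _ _ _ => rfl⟩

instance : Std.Symm F.Compatible := ⟨fun _ _ h s hw hv => (h s hv hw).symm⟩

theorem closedNbhd_compatGraph (v : S) :
    F.compatGraph.closedNbhd v = {w | F.Compatible v w} := by
  ext w
  constructor
  · rintro (rfl | ⟨-, hvw⟩)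
    exacts [refl_of F.Compatible w, hvw]
  · intro hvw
    by_cases hwv : w = v
    exacts [Or.inl hwv, Or.inr ⟨Ne.symm hwv, hvw⟩]

theorem nc_iff_transitive_compatible : F.NC ↔ Transitive F.Compatible := by
  simpa only [NC, closedNbhd_compatGraph] using neighborhood_comparable_iff_transitive F.Compatible

theorem equivalence_compatible_of_transitive (h : Transitive F.Compatible) :
    Equivalence F.Compatible :=
  ⟨refl_of F.Compatible, symm_of F.Compatible, @h⟩

end DFilter

/-- A filter is neighborhood comparable if and only if its compatibility relation is
transitive; and being reflexive and symmetric, a transitive compatibility relation is an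
equivalence relation. -/
theorem nc_iff_compatible_transitive {S Y C : Type} (F : DFilter S Y C) :
    (F.NC ↔ Transitive F.Compatible) ∧
    (Transitive F.Compatible → Equivalence F.Compatible) :=
  ⟨F.nc_iff_transitive_compatible, F.equivalence_compatible_of_transitive⟩
end

section
/- In a once-appearing-observation (OAO) deterministic filter, any two distinct states v and w that each have at least one defined outgoing transition satisfy Ext(v) ⊄ Ext(w) and Ext(w) ⊄ Ext(v); hence any OAO filter containing two distinct compatible states, each with at least one defined outgoing transition, is not globally language comparable (GLC). -/
namespace DFilter

variable {S Y C : Type} (F : DFilter S Y C)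

def IsOAO : Prop :=
  ∀ (y : Y) (v w : S), (F.tr v y).isSome → (F.tr w y).isSome → v = w

variable {F}

theorem singleton_mem_Ext_iff {v : S} {y : Y} : [y] ∈ F.Ext v ↔ (F.tr v y).isSome := by
  cases h : F.tr v y <;> simp [Ext, run, h]

theorem IsOAO.eq_of_Ext_subset (hF : F.IsOAO) {v w : S} {y : Y} (hy : (F.tr v y).isSome)
    (hsub : F.Ext v ⊆ F.Ext w) : v = w :=
  hF y v w hy (singleton_mem_Ext_iff.mp (hsub (singleton_mem_Ext_iff.mpr hy)))

theorem IsOAO.not_Ext_subset (hF : F.IsOAO) {v w : S} (hne : v ≠ w)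
    (hv : ∃ y, (F.tr v y).isSome) : ¬ F.Ext v ⊆ F.Ext w := fun hsub =>
  let ⟨_, hy⟩ := hv
  hne (hF.eq_of_Ext_subset hy hsub)

theorem IsOAO.not_GLC (hF : F.IsOAO) {v w : S} (hne : v ≠ w) (hvw : F.Compatible v w)
    (hv : ∃ y, (F.tr v y).isSome) (hw : ∃ y, (F.tr w y).isSome) : ¬ F.GLC := fun hglc =>
  (hglc v w hvw).elim (hF.not_Ext_subset hne hv) (hF.not_Ext_subset hne.symm hw)

end DFilter

/-- In a once-appearing-observation filter, any two distinct states each having at least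
one defined outgoing transition have incomparable extension sets; hence an OAO filter
containing two distinct compatible states, each with a defined outgoing transition, is not
globally language comparable. -/
theorem oao_not_glc {S Y C : Type} (F : DFilter S Y C)
    (hoao : ∀ (y : Y) (v w : S), (F.tr v y).isSome → (F.tr w y).isSome → v = w) :
    (∀ v w : S, v ≠ w → (∃ y : Y, (F.tr v y).isSome) → (∃ y : Y, (F.tr w y).isSome) →
      ¬ F.Ext v ⊆ F.Ext w ∧ ¬ F.Ext w ⊆ F.Ext v) ∧
    ((∃ v w : S, v ≠ w ∧ F.Compatible v w ∧
        (∃ y : Y, (F.tr v y).isSome) ∧ (∃ y : Y, (F.tr w y).isSome)) → ¬ F.GLC) := by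
  have hF : F.IsOAO := hoao
  refine ⟨fun v w hne hv hw => ⟨hF.not_Ext_subset hne hv, hF.not_Ext_subset hne.symm hw⟩, ?_⟩
  rintro ⟨v, w, hne, hvw, hv, hw⟩
  exact hF.not_GLC hne hvw hv hw
end
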